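/- Let D, U, R be pairwise disjoint finite sets partitioning a state set Z with |U| = 1, and let a finite configuration be a function C : ℤ → Z equal to a fixed quiescent element of R outside a finite set. Suppose every block transformation maps a pair in (D × R) ∪ (R × U) to a pair in (R × D) ∪ (U × R) ∪ (R × D). If C contains exactly one position whose state lies in P = D ∪ U, then any configuration obtained by applying one block transformation also contains exactly one position with state in P. -/
import Mathlib


/-- Pulse preservation: let Z be partitioned into pairwise disjoint sets D, U, R with
U a singleton, and let C : ℤ → Z be a finite configuration (equal to a quiescent state
q ∈ R outside a finite set). If the block-transformation partial function f has domain
contained in (D × R) ∪ (R × U) and range contained in (R × D) ∪ (U × R), and C contains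
exactly one position whose state lies in P = D ∪ U, then the configuration obtained by
applying one block transformation also contains exactly one position with state in P. -/
theorem pulse_preserved {Z : Type*} (D U R : Set Z)
    (hDU : Disjoint D U) (hDR : Disjoint D R) (hUR : Disjoint U R)
    (hpart : D ∪ U ∪ R = Set.univ) (hUone : ∃! u, u ∈ U)
    (q : Z) (hq : q ∈ R)
    (C : ℤ → Z) (hfin : {n : ℤ | C n ≠ q}.Finite)
    (f : Z × Z → Option (Z × Z))
    (hdom : ∀ p r, f p = some r → p ∈ (D ×ˢ R) ∪ (R ×ˢ U))
    (hran : ∀ p r, f p = some r → r ∈ (R ×ˢ D) ∪ (U ×ˢ R))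
    (hone : ∃! m : ℤ, C m ∈ D ∪ U)
    (n : ℤ) (z₁' z₂' : Z) (hf : f (C n, C (n + 1)) = some (z₁', z₂'))
    (C' : ℤ → Z)
    (hC' : ∀ m, C' m = if m = n then z₁' else if m = n + 1 then z₂' else C m) :
    ∃! m : ℤ, C' m ∈ D ∪ U := by
  have hR : ∀ z, z ∈ R → z ∉ D ∪ U := by
    intro z hz h
    rcases h with h | h
    · exact Set.disjoint_left.mp hDR h hz
    · exact Set.disjoint_left.mp hUR h hz
  obtain ⟨m₀, hm₀P, huniq⟩ := hone
  have hm₀ : m₀ = n ∨ m₀ = n + 1 := by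
    rcases hdom _ _ hf with h | h
    · exact Or.inl (huniq n (Or.inl h.1)).symm
    · exact Or.inr (huniq (n + 1) (Or.inr h.2)).symm
  rcases hran _ _ hf with h | h
  · refine ⟨n + 1, ?_, ?_⟩
    · show C' (n+1) ∈ D ∪ U
      rw [hC' (n + 1), if_neg (by omega), if_pos rfl]
      exact Or.inl h.2
    · intro m hm
      rw [hC' m] at hm
      split_ifs at hm with h1 h2
      · exact absurd hm (hR _ h.1)
      · exact h2
      · have := huniq m hm; omega
  · refine ⟨n, ?_, ?_⟩
    · show C' n ∈ D ∪ U
      rw [hC' n, if_pos rfl]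
      exact Or.inr h.1
    · intro m hm
      rw [hC' m] at hm
      split_ifs at hm with h1 h2
      · exact h1
      · exact absurd hm (hR _ h.2)
      · have := huniq m hm; omega
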